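/- For every t ∈ Γ and k ∈ B, the starting values of the dynamic program satisfy: g(1,t,k) = f_1(t_m) if (i) k_i = 1 for all i ∈ {1,…,m}, (ii) t_1 ≥ r_1 + p_1, and (iii) t_{i+1} ≥ t_i + p_{i+1} for all i ∈ {1,…,m−1}; otherwise g(1,t,k) = +∞. -/

import Mathlib

/-! With a single job a schedule is one completion time per machine, and it lies in `𝒮(0,t,k)`
exactly when it equals `t`, every batch is a singleton, and `t` respects the release date and the
machine chaining (Γ-activeness is the hypothesis on `t`). Its objective value is `f 0 (t last)`,
so `g(0,t,k)` is the infimum of `{f 0 (t last)}` or of `∅`. -/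

/-- A PFB instance has `m+1` machines and `n+1` jobs. `FeasibleUpTo p b r J c` is
feasibility of the schedule `c` for the sub-instance `I_J` containing only the jobs
`0,…,J`: release dates are respected on the first machine, consecutive machines leave
enough processing time, two jobs of `I_J` with different completion times on a machine
differ by at least its processing time, and at most `b i` jobs of `I_J` complete at
any given time on machine `i`. -/
def FeasibleUpTo {m n : ℕ} (p b : Fin (m + 1) → ℕ) (r : Fin (n + 1) → ℕ)
    (J : Fin (n + 1)) (c : Fin (m + 1) → Fin (n + 1) → ℕ) : Prop :=
  (∀ j ≤ J, r j + p 0 ≤ c 0 j) ∧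
  (∀ (i : Fin m), ∀ j ≤ J, c i.castSucc j + p i.succ ≤ c i.succ j) ∧
  (∀ (i : Fin (m + 1)), ∀ j ≤ J, ∀ j' ≤ J,
      c i j ≠ c i j' → c i j + p i ≤ c i j' ∨ c i j' + p i ≤ c i j) ∧
  (∀ (i : Fin (m + 1)) (t : ℕ),
      (Finset.univ.filter (fun j => j ≤ J ∧ c i j = t)).card ≤ b i)

/-- `Gamma p r i = { r j' + ∑_{i' ≤ i} λ_{i'}·p_{i'} | j' a job, λ_{i'} ∈ {1,…,n+1} }`. -/
def Gamma {m n : ℕ} (p : Fin (m + 1) → ℕ) (r : Fin (n + 1) → ℕ)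
    (i : Fin (m + 1)) : Set ℕ :=
  { x | ∃ (j' : Fin (n + 1)) (lam : Fin (m + 1) → ℕ),
      (∀ i' ≤ i, 1 ≤ lam i' ∧ lam i' ≤ n + 1) ∧
      x = r j' + ∑ i' ∈ Finset.Iic i, lam i' * p i' }

/-- `𝒮(J,t,k)`: feasible schedules for `I_J` that are ordered by the job indices,
correspond to the completion-time vector `t` and batch-size vector `k` (job `J`
completes machine `i` at time `t i` in a batch of exactly `k i` jobs of `I_J`),
and are Γ-active. -/
def SchedSet {m n : ℕ} (p b : Fin (m + 1) → ℕ) (r : Fin (n + 1) → ℕ)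
    (J : Fin (n + 1)) (t k : Fin (m + 1) → ℕ) :
    Set (Fin (m + 1) → Fin (n + 1) → ℕ) :=
  { c | FeasibleUpTo p b r J c ∧
      (∀ i : Fin (m + 1), ∀ j ≤ J, ∀ j' ≤ J, j ≤ j' → c i j ≤ c i j') ∧
      (∀ i : Fin (m + 1), c i J = t i ∧
        (Finset.univ.filter (fun j' => j' ≤ J ∧ c i j' = t i)).card = k i) ∧
      (∀ i : Fin (m + 1), ∀ j ≤ J, c i j ∈ Gamma p r i) }

/-- The objective value `⊕_{j' ≤ J} f_{j'}(C_{j'})` of a schedule for `I_J`, where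
`⊕` is the sum if `useSum = true` and the maximum otherwise. -/
noncomputable def obj {m n : ℕ} (useSum : Bool) (f : Fin (n + 1) → ℕ → ℝ)
    (J : Fin (n + 1)) (c : Fin (m + 1) → Fin (n + 1) → ℕ) : ℝ :=
  if useSum then ∑ j ∈ Finset.Iic J, f j (c (Fin.last m) j)
  else (Finset.Iic J).sup' ⟨J, Finset.mem_Iic.mpr le_rfl⟩
    fun j => f j (c (Fin.last m) j)

/-- The dynamic-programming value `g(J,t,k)`: the minimum (in `ℝ ∪ {+∞} = EReal`,
with `+∞` for an empty set) of the objective over all schedules in `𝒮(J,t,k)`. -/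
noncomputable def g {m n : ℕ} (useSum : Bool) (p b : Fin (m + 1) → ℕ)
    (r : Fin (n + 1) → ℕ) (f : Fin (n + 1) → ℕ → ℝ) (J : Fin (n + 1))
    (t k : Fin (m + 1) → ℕ) : EReal :=
  sInf { x : EReal | ∃ c ∈ SchedSet p b r J t k, x = ((obj useSum f J c : ℝ) : EReal) }

section FirstJob

variable {m n : ℕ}

lemma obj_zero (useSum : Bool) (f : Fin (n + 1) → ℕ → ℝ) (c : Fin (m + 1) → Fin (n + 1) → ℕ) :
    obj useSum f 0 c = f 0 (c (Fin.last m) 0) := by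
  have hIic : Finset.Iic (0 : Fin (n + 1)) = {0} := by
    ext j; simp
  unfold obj
  split
  · rw [hIic, Finset.sum_singleton]
  · simp only [hIic, Finset.sup'_singleton]

lemma card_filter_le_zero_and (P : Fin (n + 1) → Prop) [DecidablePred P] :
    (Finset.univ.filter fun j => j ≤ 0 ∧ P j).card = if P 0 then 1 else 0 := by
  have : (Finset.univ.filter fun j => j ≤ 0 ∧ P j) = if P 0 then {0} else ∅ := by
    ext j
    split_ifs with h <;> simp <;> grind
  rw [this]
  split_ifs <;> rfl

def IsStartVector (p : Fin (m + 1) → ℕ) (r : Fin (n + 1) → ℕ) (t k : Fin (m + 1) → ℕ) : Prop :=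
  (∀ i, k i = 1) ∧ r 0 + p 0 ≤ t 0 ∧ ∀ i : Fin m, t i.castSucc + p i.succ ≤ t i.succ

lemma mem_schedSet_zero_iff {p b : Fin (m + 1) → ℕ} {r : Fin (n + 1) → ℕ}
    (hb : ∀ i, 1 ≤ b i) {t k : Fin (m + 1) → ℕ} {c : Fin (m + 1) → Fin (n + 1) → ℕ} :
    c ∈ SchedSet p b r 0 t k ↔
      (∀ i, c i 0 = t i) ∧ (∀ i, t i ∈ Gamma p r i) ∧ IsStartVector p r t k := by
  simp only [SchedSet, FeasibleUpTo, IsStartVector, Set.mem_ofPred_eq, card_filter_le_zero_and]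
  simp only [nonpos_iff_eq_zero, forall_eq]
  constructor
  · rintro ⟨⟨hrel, hchain, -, -⟩, -, hct, hgam⟩
    have hc : ∀ i, c i 0 = t i := fun i => (hct i).1
    refine ⟨hc, fun i => hc i ▸ hgam i, fun i => ?_, hc 0 ▸ hrel, fun i => ?_⟩
    · simpa [hc i] using ((hct i).2).symm
    · simpa only [hc] using hchain i
  · rintro ⟨hc, hgam, hk, hrel, hchain⟩
    simp only [hc]
    refine ⟨⟨hrel, hchain, fun _ h => absurd rfl h, fun i s => ?_⟩, fun _ _ => le_rfl,
      fun i => ⟨trivial, by simp [hk i]⟩, hgam⟩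
    split_ifs
    exacts [hb i, Nat.zero_le _]

lemma g_zero (useSum : Bool) {p b : Fin (m + 1) → ℕ} {r : Fin (n + 1) → ℕ}
    (hb : ∀ i, 1 ≤ b i) (f : Fin (n + 1) → ℕ → ℝ) {t k : Fin (m + 1) → ℕ}
    (ht : ∀ i, t i ∈ Gamma p r i) [Decidable (IsStartVector p r t k)] :
    g useSum p b r f 0 t k =
      if IsStartVector p r t k then ((f 0 (t (Fin.last m)) : ℝ) : EReal) else ⊤ := by
  have hvalues :
      { x : EReal | ∃ c ∈ SchedSet p b r 0 t k, x = ((obj useSum f 0 c : ℝ) : EReal) } =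
      if IsStartVector p r t k then {((f 0 (t (Fin.last m)) : ℝ) : EReal)} else ∅ := by
    ext x
    simp only [mem_schedSet_zero_iff hb, obj_zero, Set.mem_ofPred_eq]
    split_ifs with h
    · exact ⟨fun ⟨c, ⟨hc, _⟩, hx⟩ => hx.trans (by rw [hc]), fun hx => ⟨fun i _ => t i,
        ⟨fun _ => rfl, ht, h⟩, hx⟩⟩
    · simp [h]
  rw [g, hvalues]
  split_ifs
  exacts [sInf_singleton, sInf_empty]

end FirstJob

theorem stmt6_general {m n : ℕ} (useSum : Bool) (p b : Fin (m + 1) → ℕ)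
    (r : Fin (n + 1) → ℕ) (hb : ∀ i, 1 ≤ b i ∧ b i ≤ n + 1)
    (f : Fin (n + 1) → ℕ → ℝ)
    (t k : Fin (m + 1) → ℕ)
    (ht : ∀ i, t i ∈ Gamma p r i) :
    (((∀ i, k i = 1) ∧ r 0 + p 0 ≤ t 0 ∧
        (∀ i : Fin m, t i.castSucc + p i.succ ≤ t i.succ)) →
      g useSum p b r f 0 t k = ((f 0 (t (Fin.last m)) : ℝ) : EReal)) ∧
    (¬ ((∀ i, k i = 1) ∧ r 0 + p 0 ≤ t 0 ∧
        (∀ i : Fin m, t i.castSucc + p i.succ ≤ t i.succ)) →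
      g useSum p b r f 0 t k = ⊤) := by
  classical
  rw [g_zero useSum (fun i => (hb i).1) f ht]
  exact ⟨fun h => if_pos h, fun h => if_neg h⟩

/-- the starting values of the dynamic program. For the first job
(index `0`), `g(0,t,k)` equals `f 0 (t_m)` if (i) all `k i = 1`, (ii)
`t 0 ≥ r 0 + p 0`, and (iii) `t (i+1) ≥ t i + p (i+1)` for consecutive machines;
otherwise it equals `+∞`. -/
theorem stmt6 {m n : ℕ} (useSum : Bool) (p b : Fin (m + 1) → ℕ)
    (r : Fin (n + 1) → ℕ) (hp : ∀ i, 1 ≤ p i) (hb : ∀ i, 1 ≤ b i ∧ b i ≤ n + 1)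
    (f : Fin (n + 1) → ℕ → ℝ) (hf : ∀ j, Monotone (f j))
    (t k : Fin (m + 1) → ℕ)
    (ht : ∀ i, t i ∈ Gamma p r i) (hk : ∀ i, 1 ≤ k i ∧ k i ≤ b i) :
    (((∀ i, k i = 1) ∧ r 0 + p 0 ≤ t 0 ∧
        (∀ i : Fin m, t i.castSucc + p i.succ ≤ t i.succ)) →
      g useSum p b r f 0 t k = ((f 0 (t (Fin.last m)) : ℝ) : EReal)) ∧
    (¬ ((∀ i, k i = 1) ∧ r 0 + p 0 ≤ t 0 ∧
        (∀ i : Fin m, t i.castSucc + p i.succ ≤ t i.succ)) →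
      g useSum p b r f 0 t k = ⊤) :=
  stmt6_general useSum p b r hb f t k ht
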